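/- Let μ, σ > 0, γ ∈ (0,1) with μ/(γσ²) < 1, 0 < λ < μ with μ + λ < γσ², and ε ∈ (0,1). Set a = sqrt(|(γ−1)(μ²−λ²)/(γσ⁴) − (1/2 − μ/σ²)²|), b = 1/2 − μ/σ² + (γ−1)(μ−λ)/(γσ²), assume (γ−1)(μ²−λ²)/(γσ⁴) − (1/2 − μ/σ²)² < 0 and |b| < a, and let w(y) = (a·tanh(artanh(b/a) − a·y) + (μ/σ² − 1/2))/(γ−1). Set l = (μ−λ)/(γσ² − (μ−λ)), u = (1/(1−ε))·(μ+λ)/(γσ² − (μ+λ)), L = log(u/l), assume L > 0, and suppose w(L) = (μ+λ)/(γσ²). Then ∫₀^L w(y) dy = ((μ/σ² − 1/2)/(γ−1))·log( (1/(1−ε))·((μ+λ)(μ−λ−γσ²))/((μ−λ)(μ+λ−γσ²)) ) + (1/(2(γ−1)))·log( ((μ+λ)(μ+λ−γσ²))/((μ−λ)(μ−λ−γσ²)) ). -/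

import Mathlib

/-!
With `c = artanh (b / a)` and `m = μ / σ ^ 2 - 1 / 2`, the function
`(m * y - log (cosh (c - a * y))) / (γ - 1)` is an antiderivative of `w`. Since
`cosh⁻² = 1 - tanh²`, the integral only depends on `m * L`, with `L = log (u / l)`, and on the
boundary values `tanh c = b / a` and `tanh (c - a * L) = b' / a`, where `b'` is `b` with `λ`
replaced by `-λ`; the latter is the condition `w L = (μ + λ) / (γ σ²)`. Finally `a ^ 2 - b ^ 2` and
`a ^ 2 - b' ^ 2` factor as `(1 - γ) p (γ σ² - p) / (γ σ²) ^ 2` with `p = μ - λ` and `p = μ + λ`,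
which produces the second logarithm.
-/

/-- Inverse hyperbolic tangent, defined on (−1, 1). -/
noncomputable def artanh (x : ℝ) : ℝ := (1 / 2) * Real.log ((1 + x) / (1 - x))

theorem tanh_artanh {x : ℝ} (hx : |x| < 1) : Real.tanh (artanh x) = x := by
  have hx' : x ∈ Set.Ioo (-1) 1 := abs_lt.mp hx
  unfold artanh
  rw [← Real.artanh_eq_half_log (Set.Ioo_subset_Icc_self hx'), Real.tanh_artanh hx']

namespace Real

@[fun_prop]
theorem continuous_tanh : Continuous tanh := by
  simp only [funext tanh_eq_sinh_div_cosh]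
  exact continuous_sinh.div continuous_cosh fun x => (cosh_pos x).ne'

theorem hasDerivAt_log_cosh (x : ℝ) : HasDerivAt (fun x => log (cosh x)) (tanh x) x := by
  simpa [tanh_eq_sinh_div_cosh] using (hasDerivAt_cosh x).log (cosh_pos x).ne'

theorem one_sub_tanh_sq (x : ℝ) : 1 - tanh x ^ 2 = (cosh x ^ 2)⁻¹ := by
  have hc := (cosh_pos x).ne'
  rw [tanh_eq_sinh_div_cosh, div_pow, cosh_sq x]
  field_simp
  ring

theorem log_cosh_sub_log_cosh (x y : ℝ) :
    log (cosh x) - log (cosh y) = 1 / 2 * log ((1 - tanh y ^ 2) / (1 - tanh x ^ 2)) := by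
  rw [one_sub_tanh_sq, one_sub_tanh_sq, inv_div_inv, log_div (by positivity) (by positivity),
    log_pow, log_pow]
  push_cast
  ring

theorem integral_tanh_sub_mul (a c m k L : ℝ) :
    ∫ y in (0 : ℝ)..L, (a * tanh (c - a * y) + m) / k =
      (m * L + (log (cosh c) - log (cosh (c - a * L)))) / k := by
  have hderiv (y : ℝ) : HasDerivAt (fun y => (m * y - log (cosh (c - a * y))) / k)
      ((a * tanh (c - a * y) + m) / k) y := by
    have hlin : HasDerivAt (fun y => c - a * y) (-a) y := by
      simpa using ((hasDerivAt_id y).const_mul a).const_sub c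
    refine ((((hasDerivAt_id y).const_mul m).sub
      ((hasDerivAt_log_cosh (c - a * y)).comp y hlin)).div_const k).congr_deriv ?_
    ring
  rw [intervalIntegral.integral_eq_sub_of_hasDerivAt (fun y _ => hderiv y)
    (by apply Continuous.intervalIntegrable; fun_prop)]
  simp only [mul_zero, sub_zero]
  ring

end Real

theorem neg_disc_sub_sq_eq {μ σ γ lam p : ℝ} (hγ : γ ≠ 0) (hσ : σ ≠ 0)
    (hp : (μ - p) ^ 2 = lam ^ 2) :
    -((γ - 1) * (μ ^ 2 - lam ^ 2) / (γ * σ ^ 4) - (1 / 2 - μ / σ ^ 2) ^ 2)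
        - (1 / 2 - μ / σ ^ 2 + (γ - 1) * p / (γ * σ ^ 2)) ^ 2 =
      (1 - γ) * p * (γ * σ ^ 2 - p) / (γ * σ ^ 2) ^ 2 := by
  rw [← hp]
  field_simp
  ring

theorem one_sub_sq_div_one_sub_sq {μ σ γ lam a : ℝ} (hσ : σ ≠ 0) (hγ : γ ≠ 0) (hγ1 : γ ≠ 1)
    (ha : a ≠ 0)
    (ha2 : a ^ 2 = -((γ - 1) * (μ ^ 2 - lam ^ 2) / (γ * σ ^ 4) - (1 / 2 - μ / σ ^ 2) ^ 2)) :
    (1 - ((1 / 2 - μ / σ ^ 2 + (γ - 1) * (μ + lam) / (γ * σ ^ 2)) / a) ^ 2) /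
        (1 - ((1 / 2 - μ / σ ^ 2 + (γ - 1) * (μ - lam) / (γ * σ ^ 2)) / a) ^ 2) =
      ((μ + lam) * (μ + lam - γ * σ ^ 2)) / ((μ - lam) * (μ - lam - γ * σ ^ 2)) := by
  have one_sub_div_sq (x : ℝ) : 1 - (x / a) ^ 2 = (a ^ 2 - x ^ 2) / a ^ 2 := by field_simp
  rw [one_sub_div_sq, one_sub_div_sq, div_div_div_cancel_right₀ (pow_ne_zero 2 ha), ha2,
    neg_disc_sub_sq_eq hγ hσ (by ring), neg_disc_sub_sq_eq hγ hσ (by ring),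
    div_div_div_cancel_right₀ (by positivity), mul_assoc, mul_assoc,
    mul_div_mul_left _ _ (sub_ne_zero.2 hγ1.symm), ← neg_div_neg_eq]
  congr 1 <;> ring

theorem mul_div_sub_div_div_sub_eq {K : Type*} [Field K] (k p q A : K) :
    k * (q / (A - q)) / (p / (A - p)) = k * (q * (p - A)) / (p * (q - A)) := by
  rw [← mul_div_assoc, div_div_div_eq, ← neg_sub A p, ← neg_sub A q, mul_neg q, mul_neg k,
    mul_neg p, neg_div_neg_eq]
  ring

theorem integral_of_w_closed_form_general (μ σ γ lam ε : ℝ)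
    (hσ : 0 < σ) (hγ0 : 0 < γ) (hγ1 : γ < 1)
    (a b : ℝ)
    (ha : a = Real.sqrt |(γ - 1) * (μ ^ 2 - lam ^ 2) / (γ * σ ^ 4) - (1 / 2 - μ / σ ^ 2) ^ 2|)
    (hb : b = 1 / 2 - μ / σ ^ 2 + (γ - 1) * (μ - lam) / (γ * σ ^ 2))
    (hD : (γ - 1) * (μ ^ 2 - lam ^ 2) / (γ * σ ^ 4) - (1 / 2 - μ / σ ^ 2) ^ 2 < 0)
    (hba : |b| < a)
    (w : ℝ → ℝ)
    (hw : w = fun y => (a * Real.tanh (artanh (b / a) - a * y) + (μ / σ ^ 2 - 1 / 2)) / (γ - 1))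
    (l u L : ℝ)
    (hl : l = (μ - lam) / (γ * σ ^ 2 - (μ - lam)))
    (hu : u = (1 / (1 - ε)) * ((μ + lam) / (γ * σ ^ 2 - (μ + lam))))
    (hL : L = Real.log (u / l))
    (hwL : w L = (μ + lam) / (γ * σ ^ 2)) :
    ∫ y in (0 : ℝ)..L, w y =
      ((μ / σ ^ 2 - 1 / 2) / (γ - 1)) *
        Real.log ((1 / (1 - ε)) *
          ((μ + lam) * (μ - lam - γ * σ ^ 2)) / ((μ - lam) * (μ + lam - γ * σ ^ 2)))
      + (1 / (2 * (γ - 1))) *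
        Real.log (((μ + lam) * (μ + lam - γ * σ ^ 2)) / ((μ - lam) * (μ - lam - γ * σ ^ 2))) := by
  have hγ1ne : γ - 1 ≠ 0 := sub_ne_zero.2 hγ1.ne
  have ha0 : 0 < a := (abs_nonneg b).trans_lt hba
  have ha2 : a ^ 2 = -((γ - 1) * (μ ^ 2 - lam ^ 2) / (γ * σ ^ 4) - (1 / 2 - μ / σ ^ 2) ^ 2) := by
    rw [ha, Real.sq_sqrt (abs_nonneg _), abs_of_neg hD]
  have htanh0 : Real.tanh (artanh (b / a)) = b / a :=
    tanh_artanh (by rwa [abs_div, abs_of_pos ha0, div_lt_one ha0])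
  have htanhL : Real.tanh (artanh (b / a) - a * L) =
      (1 / 2 - μ / σ ^ 2 + (γ - 1) * (μ + lam) / (γ * σ ^ 2)) / a := by
    rw [hw, div_eq_iff hγ1ne] at hwL
    rw [eq_div_iff ha0.ne']
    linear_combination hwL
  simp only [hw]
  rw [Real.integral_tanh_sub_mul, Real.log_cosh_sub_log_cosh, htanh0, htanhL, hb,
    one_sub_sq_div_one_sub_sq hσ.ne' hγ0.ne' hγ1.ne ha0.ne' ha2, hL, hl, hu,
    mul_div_sub_div_div_sub_eq]
  field_simp

/-- closed-form value of the integral `∫₀^L w(y) dy` of the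
explicit (hyperbolic-tangent case) solution of the Riccati ODE over the
no-trade region. -/
theorem integral_of_w_closed_form (μ σ γ lam ε : ℝ)
    (hμ : 0 < μ) (hσ : 0 < σ) (hγ0 : 0 < γ) (hγ1 : γ < 1)
    (hmerton : μ / (γ * σ ^ 2) < 1)
    (hlam0 : 0 < lam) (hlamμ : lam < μ) (hlev : μ + lam < γ * σ ^ 2)
    (hε : ε ∈ Set.Ioo (0 : ℝ) 1)
    (a b : ℝ)
    (ha : a = Real.sqrt |(γ - 1) * (μ ^ 2 - lam ^ 2) / (γ * σ ^ 4) - (1 / 2 - μ / σ ^ 2) ^ 2|)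
    (hb : b = 1 / 2 - μ / σ ^ 2 + (γ - 1) * (μ - lam) / (γ * σ ^ 2))
    (hD : (γ - 1) * (μ ^ 2 - lam ^ 2) / (γ * σ ^ 4) - (1 / 2 - μ / σ ^ 2) ^ 2 < 0)
    (hba : |b| < a)
    (w : ℝ → ℝ)
    (hw : w = fun y => (a * Real.tanh (artanh (b / a) - a * y) + (μ / σ ^ 2 - 1 / 2)) / (γ - 1))
    (l u L : ℝ)
    (hl : l = (μ - lam) / (γ * σ ^ 2 - (μ - lam)))
    (hu : u = (1 / (1 - ε)) * ((μ + lam) / (γ * σ ^ 2 - (μ + lam))))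
    (hL : L = Real.log (u / l)) (hLpos : 0 < L)
    (hwL : w L = (μ + lam) / (γ * σ ^ 2)) :
    ∫ y in (0 : ℝ)..L, w y =
      ((μ / σ ^ 2 - 1 / 2) / (γ - 1)) *
        Real.log ((1 / (1 - ε)) *
          ((μ + lam) * (μ - lam - γ * σ ^ 2)) / ((μ - lam) * (μ + lam - γ * σ ^ 2)))
      + (1 / (2 * (γ - 1))) *
        Real.log (((μ + lam) * (μ + lam - γ * σ ^ 2)) / ((μ - lam) * (μ - lam - γ * σ ^ 2))) :=
  integral_of_w_closed_form_general μ σ γ lam ε hσ hγ0 hγ1 a b ha hb hD hba w hw l u L hl hu hL hwL
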